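/- In ambiguous online learning, for every hypothesis class H and horizon N, if there exists an ambiguous shattered H-tree T with depth n and rank r, then every deterministic learner A makes at least r mistakes on some h ∈ H and some trace of length at most n compatible with h. Hence M*_H(n) ≥ AL(H, n). -/

import Mathlib

/-! The adversary walks down the tree. At an internal vertex `v` it reveals the instance
`xlab v` and then answers with a child edge: with an edge outside `E₀` whose label the
learner's prediction set misses, if there is one, and otherwise with the `E₀`-edge. In the
first case the learner is overconfident. In the second, if the `E₀`-edge is relevant to the
leaf finally reached, some sibling label lies outside that leaf's hypothesis but inside the
prediction, so the learner is underconfident. Hence every relevant edge on the root-to-leaf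
path costs the learner one mistake, and the rank is at most the number of mistakes. -/

/-- A finite rooted tree: vertices, a root, and a parent map under which every
vertex reaches the root. -/
structure RTree where
  V : Type
  [fin : Fintype V]
  root : V
  parent : V → V
  parent_root : parent root = root
  reaches : ∀ v : V, ∃ k : ℕ, parent^[k] v = root

namespace RTree

/-- Children of a vertex (the root is not a child of anything). -/
def children (t : RTree) (v : t.V) : Set t.V := {w | t.parent w = v ∧ w ≠ t.root}

def IsLeaf (t : RTree) (v : t.V) : Prop := t.children v = ∅

/-- `a` is an ancestor (or equal to) `u`. -/
def Anc (t : RTree) (a u : t.V) : Prop := ∃ k : ℕ, t.parent^[k] u = a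

noncomputable def depthOf (t : RTree) (v : t.V) : ℕ := sInf {k : ℕ | t.parent^[k] v = t.root}

noncomputable def depth (t : RTree) : ℕ := sSup {n : ℕ | ∃ v : t.V, n = t.depthOf v}

end RTree

/-- An ambiguous shattered `H`-tree: internal vertices carry instances, non-root
vertices (identified with the edges to their parents) carry labels, distinct among
siblings, leaves carry hypotheses from `H` compatible with all edge labels above
them, and `E0` selects exactly one child edge of each internal vertex. -/
structure AmbTree (X Y : Type) (H : Set (X → Set Y)) where
  t : RTree
  xlab : t.V → X
  ylab : t.V → Y
  hlab : t.V → (X → Set Y)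
  E0 : Set t.V
  e0_ne_root : ∀ a ∈ E0, a ≠ t.root
  e0_unique : ∀ v : t.V, (t.children v).Nonempty → ∃! a : t.V, a ∈ t.children v ∩ E0
  sib_distinct : ∀ a b : t.V, a ≠ t.root → b ≠ t.root →
    t.parent a = t.parent b → a ≠ b → ylab a ≠ ylab b
  hlab_mem : ∀ u : t.V, t.IsLeaf u → hlab u ∈ H
  path_mem : ∀ u a : t.V, t.IsLeaf u → t.Anc a u → a ≠ t.root →
    ylab a ∈ hlab u (xlab (t.parent a))

namespace AmbTree

variable {X Y : Type} {H : Set (X → Set Y)}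

/-- Edge `a` (on the root-to-`u` path) is relevant to leaf `u`. -/
def Relevant (T : AmbTree X Y H) (a u : T.t.V) : Prop :=
  a ≠ T.t.root ∧ T.t.Anc a u ∧
    (a ∉ T.E0 ∨ ∃ b : T.t.V, T.t.parent b = T.t.parent a ∧ b ≠ T.t.root ∧
      T.ylab b ∉ T.hlab u (T.xlab (T.t.parent a)))

noncomputable def relCount (T : AmbTree X Y H) (u : T.t.V) : ℕ :=
  {a : T.t.V | T.Relevant a u}.ncard

/-- Rank: the minimum over leaves of the number of relevant edges. -/
noncomputable def rank (T : AmbTree X Y H) : ℕ :=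
  sInf {n : ℕ | ∃ u : T.t.V, T.t.IsLeaf u ∧ n = T.relCount u}

noncomputable def depth (T : AmbTree X Y H) : ℕ := T.t.depth

end AmbTree

/-- `AL(H, N)`: the maximal rank of an ambiguous shattered `H`-tree of depth at most `N`. -/
noncomputable def ALn (X Y : Type) (H : Set (X → Set Y)) (N : ℕ) : ℕ :=
  sSup {r : ℕ | ∃ T : AmbTree X Y H, T.depth ≤ N ∧ r = T.rank}

/-- A trace is compatible with `h` when every observed label is allowed by `h`. -/
def Compatible {X Y : Type} (h : X → Set Y) (xs : List (X × Y)) : Prop :=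
  ∀ p ∈ xs, p.2 ∈ h p.1

/-- Number of mistakes (overconfidence or underconfidence) of learner `A` on a
trace, relative to hypothesis `h`. -/
noncomputable def numMistakes {X Y : Type} (A : List (X × Y) → X → Set Y)
    (h : X → Set Y) (xs : List (X × Y)) : ℕ :=
  {k : ℕ | ∃ hk : k < xs.length,
    (xs.get ⟨k, hk⟩).2 ∉ A (xs.take k) (xs.get ⟨k, hk⟩).1 ∨
      ¬ A (xs.take k) (xs.get ⟨k, hk⟩).1 ⊆ h (xs.get ⟨k, hk⟩).1}.ncard

/-- The minimax mistake bound for deterministic learners over traces of length `N`. -/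
noncomputable def Mstar {X Y : Type} (H : Set (X → Set Y)) (N : ℕ) : ℕ :=
  sInf {m : ℕ | ∃ A : List (X × Y) → X → Set Y, ∀ h ∈ H, ∀ xs : List (X × Y),
    Compatible h xs → xs.length = N → numMistakes A h xs ≤ m}

namespace RTree

variable (t : RTree)

instance : Fintype t.V := t.fin

lemma iterate_parent_root (k : ℕ) : t.parent^[k] t.root = t.root :=
  Function.iterate_fixed t.parent_root k

lemma iterate_depthOf (v : t.V) : t.parent^[t.depthOf v] v = t.root :=
  Nat.sInf_mem (t.reaches v)

variable {t}

lemma depthOf_le_of_iterate {v : t.V} {k : ℕ} (h : t.parent^[k] v = t.root) :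
    t.depthOf v ≤ k :=
  Nat.sInf_le h

lemma depthOf_root : t.depthOf t.root = 0 :=
  Nat.le_zero.mp (depthOf_le_of_iterate rfl)

lemma depthOf_le_depthOf_iterate_add (k : ℕ) (v : t.V) :
    t.depthOf v ≤ t.depthOf (t.parent^[k] v) + k :=
  depthOf_le_of_iterate (by rw [Function.iterate_add_apply, iterate_depthOf])

lemma depthOf_iterate {k : ℕ} {v : t.V} (h : k ≤ t.depthOf v) :
    t.depthOf (t.parent^[k] v) = t.depthOf v - k := by
  have hle : t.depthOf (t.parent^[k] v) ≤ t.depthOf v - k := depthOf_le_of_iterate (by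
    rw [← Function.iterate_add_apply, Nat.sub_add_cancel h, iterate_depthOf])
  have := depthOf_le_depthOf_iterate_add k v
  omega

lemma depthOf_of_mem_children {a v : t.V} (h : a ∈ t.children v) :
    t.depthOf a = t.depthOf v + 1 := by
  obtain ⟨hpa, ha⟩ := h
  have hpos : 1 ≤ t.depthOf a := Nat.one_le_iff_ne_zero.mpr fun h0 =>
    ha (by simpa [h0] using t.iterate_depthOf a)
  have := depthOf_iterate hpos
  rw [Function.iterate_one, hpa] at this
  omega

lemma depthOf_le_depth (v : t.V) : t.depthOf v ≤ t.depth :=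
  le_csSup ((Set.finite_range t.depthOf).subset
    (by rintro _ ⟨w, rfl⟩; exact ⟨w, rfl⟩)).bddAbove ⟨v, rfl⟩

lemma root_anc (v : t.V) : t.Anc t.root v :=
  t.reaches v

namespace Anc

lemma refl (v : t.V) : t.Anc v v :=
  ⟨0, rfl⟩

lemma trans {a b c : t.V} (hab : t.Anc a b) (hbc : t.Anc b c) : t.Anc a c := by
  obtain ⟨i, rfl⟩ := hab
  obtain ⟨j, rfl⟩ := hbc
  exact ⟨i + j, Function.iterate_add_apply _ _ _ _⟩

lemma of_mem_children {a v : t.V} (h : a ∈ t.children v) : t.Anc v a :=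
  ⟨1, h.1⟩

lemma depthOf_le {a v : t.V} (h : t.Anc a v) : t.depthOf a ≤ t.depthOf v := by
  obtain ⟨i, rfl⟩ := h
  exact depthOf_le_of_iterate (by
    rw [← Function.iterate_add_apply, add_comm, Function.iterate_add_apply, iterate_depthOf,
      iterate_parent_root])

lemma iterate_depthOf_sub {a v : t.V} (h : t.Anc a v) :
    t.parent^[t.depthOf v - t.depthOf a] v = a := by
  obtain ⟨i, rfl⟩ := h
  rcases le_or_gt i (t.depthOf v) with hi | hi
  · rw [depthOf_iterate hi, Nat.sub_sub_self hi]
  · have hroot : t.parent^[i] v = t.root := by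
      rw [← Nat.sub_add_cancel hi.le, Function.iterate_add_apply, iterate_depthOf,
        iterate_parent_root]
    rw [hroot, depthOf_root, Nat.sub_zero, iterate_depthOf]

lemma eq_of_depthOf_eq {a b v : t.V} (ha : t.Anc a v) (hb : t.Anc b v)
    (hd : t.depthOf a = t.depthOf b) : a = b := by
  rw [← ha.iterate_depthOf_sub, ← hb.iterate_depthOf_sub, hd]

lemma antisymm {a v : t.V} (h : t.Anc a v) (h' : t.Anc v a) : a = v :=
  h.eq_of_depthOf_eq (refl v) (le_antisymm h.depthOf_le h'.depthOf_le)

lemma depthOf_lt {a v : t.V} (h : t.Anc a v) (hne : a ≠ v) : t.depthOf a < t.depthOf v :=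
  h.depthOf_le.lt_of_ne fun hd => hne (h.eq_of_depthOf_eq (refl v) hd)

lemma of_depthOf_le {a b v : t.V} (ha : t.Anc a v) (hb : t.Anc b v)
    (hd : t.depthOf a ≤ t.depthOf b) : t.Anc a b := by
  have hbv := hb.depthOf_le
  have hsplit : t.parent^[t.depthOf v - t.depthOf a] v =
      t.parent^[t.depthOf b - t.depthOf a] (t.parent^[t.depthOf v - t.depthOf b] v) := by
    rw [← Function.iterate_add_apply]
    congr 1
    omega
  rw [ha.iterate_depthOf_sub, hb.iterate_depthOf_sub] at hsplit
  exact ⟨_, hsplit.symm⟩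

end Anc

end RTree

open Classical in
lemma Set.ncard_eq_ite_add_ncard_preimage_succ {s : Set ℕ} (hs : s.Finite) :
    s.ncard = (if 0 ∈ s then 1 else 0) + (Nat.succ ⁻¹' s).ncard := by
  have hsplit : s = (s ∩ {0}) ∪ Nat.succ '' (Nat.succ ⁻¹' s) := by
    ext (_ | k) <;> simp
  have hdisj : Disjoint (s ∩ {0}) (Nat.succ '' (Nat.succ ⁻¹' s)) :=
    Set.disjoint_left.2 fun _ ⟨_, h0⟩ ⟨k, _, hk⟩ => Nat.succ_ne_zero k (hk.trans h0)
  conv_lhs => rw [hsplit]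
  rw [Set.ncard_union_eq hdisj (hs.inter_of_left _)
    ((hs.preimage Nat.succ_injective.injOn).image _),
    Set.ncard_image_of_injective _ Nat.succ_injective]
  split_ifs with h0 <;> simp [h0]

section Mistakes

variable {X Y : Type}

lemma numMistakes_le_length (A : List (X × Y) → X → Set Y) (h : X → Set Y)
    (xs : List (X × Y)) : numMistakes A h xs ≤ xs.length := by
  calc numMistakes A h xs ≤ (Set.Iio xs.length).ncard :=
        Set.ncard_le_ncard (fun k ⟨hk, _⟩ => hk) (Set.finite_Iio _)
    _ = xs.length := by rw [← Finset.coe_Iio, Set.ncard_coe_finset, Nat.card_Iio]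

open Classical in
lemma numMistakes_cons (A : List (X × Y) → X → Set Y) (h : X → Set Y) (x : X) (y : Y)
    (xs : List (X × Y)) :
    numMistakes A h ((x, y) :: xs) = (if y ∉ A [] x ∨ ¬ A [] x ⊆ h x then 1 else 0) +
      numMistakes (fun l => A ((x, y) :: l)) h xs := by
  rw [numMistakes, Set.ncard_eq_ite_add_ncard_preimage_succ]
  · congr 1
    · simp
    · congr 1
      ext k
      simp [List.take_succ_cons]
  · exact (Set.finite_Iio _).subset fun k ⟨hk, _⟩ => hk

end Mistakes

namespace AmbTree

open RTree

variable {X Y : Type} {H : Set (X → Set Y)} (T : AmbTree X Y H)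

def relevantBelow (v u : T.t.V) : Set T.t.V :=
  {b | T.Relevant b u ∧ T.t.Anc v b ∧ b ≠ v}

lemma relevantBelow_self (v : T.t.V) : T.relevantBelow v v = ∅ :=
  Set.eq_empty_of_forall_notMem fun _ ⟨hrel, hvb, hbv⟩ => hbv (hrel.2.1.antisymm hvb)

lemma relCount_eq_ncard_relevantBelow_root (u : T.t.V) :
    T.relCount u = (T.relevantBelow T.t.root u).ncard :=
  congrArg Set.ncard (Set.ext fun b => ⟨fun h => ⟨h, root_anc b, h.1⟩, fun h => h.1⟩)

variable {T}

lemma relevantBelow_subset_insert {a v u : T.t.V} (ha : a ∈ T.t.children v)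
    (hau : T.t.Anc a u) : T.relevantBelow v u ⊆ insert a (T.relevantBelow a u) := by
  rintro b ⟨hrel, hvb, hbv⟩
  refine or_iff_not_imp_left.2 fun hba => ⟨hrel, hau.of_depthOf_le hrel.2.1 ?_, hba⟩
  have := hvb.depthOf_lt (Ne.symm hbv)
  rw [depthOf_of_mem_children ha]
  omega

open Classical in
lemma ncard_relevantBelow_le {a v u : T.t.V} (ha : a ∈ T.t.children v) (hau : T.t.Anc a u) :
    (T.relevantBelow v u).ncard ≤
      (if T.Relevant a u then 1 else 0) + (T.relevantBelow a u).ncard := by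
  have hsub := relevantBelow_subset_insert ha hau
  split_ifs with hrel
  · rw [add_comm]
    exact (Set.ncard_le_ncard hsub (Set.toFinite _)).trans (Set.ncard_insert_le _ _)
  · rw [zero_add]
    exact Set.ncard_le_ncard (fun b hb => (hsub hb).resolve_left (by rintro rfl; exact hrel hb.1))
      (Set.toFinite _)

lemma ylab_mem_hlab {a v u : T.t.V} (ha : a ∈ T.t.children v) (hu : T.t.IsLeaf u)
    (hau : T.t.Anc a u) : T.ylab a ∈ T.hlab u (T.xlab v) :=
  ha.1 ▸ T.path_mem u a hu hau ha.2

lemma exists_child_forcing_mistake {v : T.t.V} (hv : ¬ T.t.IsLeaf v) (P : Set Y) :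
    ∃ a ∈ T.t.children v, ∀ u, T.t.IsLeaf u → T.t.Anc a u → T.Relevant a u →
      T.ylab a ∉ P ∨ ¬ P ⊆ T.hlab u (T.xlab v) := by
  by_cases hout : ∃ b ∈ T.t.children v, b ∉ T.E0 ∧ T.ylab b ∉ P
  · obtain ⟨b, hb, -, hbP⟩ := hout
    exact ⟨b, hb, fun _ _ _ _ => Or.inl hbP⟩
  push Not at hout
  obtain ⟨a, ⟨ha, haE⟩, huniq⟩ := T.e0_unique v (Set.nonempty_iff_ne_empty.mpr hv)
  refine ⟨a, ha, fun u hu hau hrel => Or.inr fun hPu => ?_⟩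
  obtain haE' | ⟨b, hbp, hbr, hbu⟩ := hrel.2.2
  · exact haE' haE
  rw [ha.1] at hbp hbu
  have hb : b ∈ T.t.children v := ⟨hbp, hbr⟩
  have hba : b ≠ a := by
    rintro rfl
    exact hbu (ylab_mem_hlab ha hu hau)
  exact hbu (hPu (hout b hb fun hbE => hba (huniq b ⟨hb, hbE⟩)))

variable (T)

theorem exists_leaf_trace (v : T.t.V) (A : List (X × Y) → X → Set Y) :
    ∃ u, T.t.IsLeaf u ∧ T.t.Anc v u ∧ ∃ xs : List (X × Y), Compatible (T.hlab u) xs ∧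
      xs.length + T.t.depthOf v = T.t.depthOf u ∧
      (T.relevantBelow v u).ncard ≤ numMistakes A (T.hlab u) xs := by
  induction hk : T.t.depth - T.t.depthOf v using Nat.strong_induction_on generalizing v A with
  | _ k ih =>
  by_cases hv : T.t.IsLeaf v
  · exact ⟨v, hv, Anc.refl v, [], by simp [Compatible], by simp,
      by simp [relevantBelow_self]⟩
  obtain ⟨a, ha, hforce⟩ := exists_child_forcing_mistake hv (A [] (T.xlab v))
  have hda := depthOf_of_mem_children ha
  obtain ⟨u, hu, hau, xs, hcomp, hlen, hcount⟩ :=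
    ih _ (by have := depthOf_le_depth a; omega) a (fun l => A ((T.xlab v, T.ylab a) :: l)) rfl
  refine ⟨u, hu, (Anc.of_mem_children ha).trans hau, (T.xlab v, T.ylab a) :: xs,
    List.forall_mem_cons.2 ⟨ylab_mem_hlab ha hu hau, hcomp⟩,
    by rw [List.length_cons]; omega, ?_⟩
  rw [numMistakes_cons]
  refine (ncard_relevantBelow_le ha hau).trans (add_le_add ?_ hcount)
  split_ifs with hrel hmis <;> first | omega | exact absurd (hforce u hu hau hrel) hmis

theorem exists_compatible_rank_le_numMistakes (A : List (X × Y) → X → Set Y) :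
    ∃ h ∈ H, ∃ xs : List (X × Y), Compatible h xs ∧ xs.length ≤ T.depth ∧
      T.rank ≤ numMistakes A h xs := by
  obtain ⟨u, hu, -, xs, hcomp, hlen, hcount⟩ := T.exists_leaf_trace T.t.root A
  refine ⟨T.hlab u, T.hlab_mem u hu, xs, hcomp, ?_, ?_⟩
  · rw [depthOf_root, add_zero] at hlen
    exact hlen ▸ depthOf_le_depth u
  · calc T.rank ≤ T.relCount u := Nat.sInf_le ⟨u, hu, rfl⟩
      _ = (T.relevantBelow T.t.root u).ncard := T.relCount_eq_ncard_relevantBelow_root u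
      _ ≤ numMistakes A (T.hlab u) xs := hcount

end AmbTree

theorem lower_bound_from_tree_general {X Y : Type} (H : Set (X → Set Y)) :
    (∀ (T : AmbTree X Y H) (A : List (X × Y) → X → Set Y),
      ∃ h ∈ H, ∃ xs : List (X × Y), Compatible h xs ∧ xs.length ≤ T.depth ∧
        T.rank ≤ numMistakes A h xs) ∧
      ∀ N : ℕ, ALn X Y H N ≤
        sInf {m : ℕ | ∃ A : List (X × Y) → X → Set Y, ∀ h ∈ H, ∀ xs : List (X × Y),
          Compatible h xs → xs.length ≤ N → numMistakes A h xs ≤ m} := by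
  refine ⟨fun T A => T.exists_compatible_rank_le_numMistakes A, fun N => csSup_le' ?_⟩
  rintro _ ⟨T, hT, rfl⟩
  refine le_csInf
    ⟨N, fun _ _ => ∅, fun h _ xs _ hxs => (numMistakes_le_length _ h xs).trans hxs⟩ ?_
  rintro m ⟨A, hA⟩
  obtain ⟨h, hH, xs, hcomp, hlen, hrank⟩ := T.exists_compatible_rank_le_numMistakes A
  exact hrank.trans (hA h hH xs hcomp (hlen.trans hT))

/-- every ambiguous shattered `H`-tree `T` forces every deterministic
learner to make at least `Rank(T)` mistakes on some `h ∈ H` and some compatible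
trace of length at most `Depth(T)`; hence the minimax mistake bound over traces of
length at most `n` is at least `AL(H, n)`. -/
theorem lower_bound_from_tree {X Y : Type} [Fintype Y] (H : Set (X → Set Y)) :
    (∀ (T : AmbTree X Y H) (A : List (X × Y) → X → Set Y),
      ∃ h ∈ H, ∃ xs : List (X × Y), Compatible h xs ∧ xs.length ≤ T.depth ∧
        T.rank ≤ numMistakes A h xs) ∧
      ∀ N : ℕ, ALn X Y H N ≤
        sInf {m : ℕ | ∃ A : List (X × Y) → X → Set Y, ∀ h ∈ H, ∀ xs : List (X × Y),
          Compatible h xs → xs.length ≤ N → numMistakes A h xs ≤ m} :=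
  lower_bound_from_tree_general H
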